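/- arXiv:2111.07388 — 5 statements merged into one kernel-verified Lean document; each statement's English description precedes it below -/
import Mathlib

section
/- Let (Ω, 𝒜, μ) be a probability space, let X, T, Y₀, Y₁ : Ω → ℝ be random variables with Y₀, Y₁ integrable, suppose T = 1{X ≥ 0} μ-almost surely (correct classification of treatment assignment with perfect compliance), and set Y := Y₀ + T·(Y₁ − Y₀). Let g₀, g₁ : ℝ → ℝ be Borel measurable functions such that gₜ ∘ X is a version of the conditional expectation of Yₜ given the σ-algebra generated by X, for t = 0, 1, and suppose g₀ and g₁ are continuous at 0. Define g(x) := g₁(x) if x ≥ 0 and g(x) := g₀(x) if x < 0. Then (i) g ∘ X is a version of the conditional expectation of Y given the σ-algebra generated by X, and (ii) g(x) tends to g₁(0) as x → 0 from the right and to g₀(0) as x → 0 from the left, so that the jump lim_{x↓0} g(x) − lim_{x↑0} g(x) equals g₁(0) − g₀(0). -/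
open MeasureTheory Filter Set Topology

/-! Below the cutoff the observed outcome is `Y₀` and above it `Y₁`, and the region
`{X ≥ 0}` is measurable with respect to `σ(X)`, so the conditional mean of `Y` given `X` is
obtained by pasting those of `Y₁` and `Y₀` along the cutoff. The one-sided limits of the pasted
function at `0` only see `g₁` on the right and `g₀` on the left. -/

section ConditionalExpectation

variable {α E : Type*} {m m₀ : MeasurableSpace α} {μ : Measure α}
  [NormedAddCommGroup E] [NormedSpace ℝ E] [CompleteSpace E]

theorem condExp_piecewise {s : Set α} [DecidablePred (· ∈ s)] {f g : α → E}
    (hf : Integrable f μ) (hg : Integrable g μ) (hs : MeasurableSet[m] s) :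
    μ[s.piecewise f g | m] =ᵐ[μ] s.piecewise (μ[f | m]) (μ[g | m]) := by
  by_cases hm : m ≤ m₀
  · rw [← indicator_add_compl_eq_piecewise, ← indicator_add_compl_eq_piecewise]
    exact (condExp_add (hf.indicator (hm _ hs)) (hg.indicator (hm _ hs.compl)) m).trans
      ((condExp_indicator hf hs).add (condExp_indicator hg hs.compl))
  · simp_rw [condExp_of_not_le hm, piecewise_same]
    rfl

end ConditionalExpectation

section OneSidedLimits

variable {α β : Type*} [TopologicalSpace α] [LinearOrder α] [TopologicalSpace β]
  {f₀ f₁ : α → β} {a : α}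

theorem ContinuousWithinAt.tendsto_ite_nhdsGT (h : ContinuousWithinAt f₁ (Ioi a) a) :
    Tendsto (fun x => if a ≤ x then f₁ x else f₀ x) (𝓝[>] a) (𝓝 (f₁ a)) :=
  h.tendsto.congr' <| eventually_nhdsWithin_of_forall fun _ hx => (if_pos (le_of_lt hx)).symm

theorem ContinuousWithinAt.tendsto_ite_nhdsLT (h : ContinuousWithinAt f₀ (Iio a) a) :
    Tendsto (fun x => if a ≤ x then f₁ x else f₀ x) (𝓝[<] a) (𝓝 (f₀ a)) :=
  h.tendsto.congr' <| eventually_nhdsWithin_of_forall fun _ hx => (if_neg (not_le.mpr hx)).symm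

end OneSidedLimits

theorem observedOutcome_ae_eq_piecewise {Ω : Type*} [MeasurableSpace Ω] {μ : Measure Ω}
    {X T Y₀ Y₁ : Ω → ℝ} [DecidablePred (· ∈ X ⁻¹' Ici 0)]
    (hTX : T =ᵐ[μ] fun ω => if 0 ≤ X ω then (1 : ℝ) else 0) :
    (fun ω => Y₀ ω + T ω * (Y₁ ω - Y₀ ω)) =ᵐ[μ] (X ⁻¹' Ici 0).piecewise Y₁ Y₀ := by
  filter_upwards [hTX] with ω hω
  by_cases h : 0 ≤ X ω <;> simp [hω, h]

theorem stmt0_general {Ω : Type*} [MeasurableSpace Ω] (μ : Measure Ω)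
    (X T Y₀ Y₁ : Ω → ℝ)
    (hY₀i : Integrable Y₀ μ) (hY₁i : Integrable Y₁ μ)
    (hTX : T =ᵐ[μ] fun ω => if 0 ≤ X ω then (1 : ℝ) else 0)
    (Y : Ω → ℝ) (hY : Y = fun ω => Y₀ ω + T ω * (Y₁ ω - Y₀ ω))
    (g₀ g₁ : ℝ → ℝ)
    (hg₀ : (fun ω => g₀ (X ω)) =ᵐ[μ] μ[Y₀ | MeasurableSpace.comap X (borel ℝ)])
    (hg₁ : (fun ω => g₁ (X ω)) =ᵐ[μ] μ[Y₁ | MeasurableSpace.comap X (borel ℝ)])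
    (hc₀ : ContinuousAt g₀ 0) (hc₁ : ContinuousAt g₁ 0)
    (g : ℝ → ℝ) (hg : g = fun x => if 0 ≤ x then g₁ x else g₀ x) :
    ((fun ω => g (X ω)) =ᵐ[μ] μ[Y | MeasurableSpace.comap X (borel ℝ)]) ∧
      Tendsto g (𝓝[>] (0 : ℝ)) (𝓝 (g₁ 0)) ∧
      Tendsto g (𝓝[<] (0 : ℝ)) (𝓝 (g₀ 0)) := by
  subst hY hg
  refine ⟨?_, hc₁.continuousWithinAt.tendsto_ite_nhdsGT, hc₀.continuousWithinAt.tendsto_ite_nhdsLT⟩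
  classical
  set s := X ⁻¹' Ici 0
  have hs : MeasurableSet[MeasurableSpace.comap X (borel ℝ)] s := ⟨Ici 0, measurableSet_Ici, rfl⟩
  calc (fun ω => if 0 ≤ X ω then g₁ (X ω) else g₀ (X ω))
      = s.piecewise (fun ω => g₁ (X ω)) (fun ω => g₀ (X ω)) := by
        ext ω; simp [s, piecewise]
    _ =ᵐ[μ] s.piecewise (μ[Y₁ | _]) (μ[Y₀ | _]) := by
        filter_upwards [hg₀, hg₁] with ω h₀ h₁
        by_cases h : ω ∈ s <;> simp [h, h₀, h₁]
    _ =ᵐ[μ] μ[s.piecewise Y₁ Y₀ | _] := (condExp_piecewise hY₁i hY₀i hs).symm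
    _ =ᵐ[μ] _ := condExp_congr_ae (observedOutcome_ae_eq_piecewise hTX).symm

/-- Sharp RD: if treatment equals the indicator `1{X ≥ 0}` a.s., the potential outcomes have
conditional means `g₀, g₁` given `X` that are continuous at `0`, then
`g(x) = g₁(x) 1{x ≥ 0} + g₀(x) 1{x < 0}` composed with `X` is a version of the conditional mean
of the observed outcome `Y = Y₀ + T (Y₁ - Y₀)` given `X`, and `g` tends to `g₁ 0` from the right
and `g₀ 0` from the left of the cutoff (so the jump is `g₁ 0 - g₀ 0`). -/
theorem stmt0 {Ω : Type*} [MeasurableSpace Ω] (μ : Measure Ω) [IsProbabilityMeasure μ]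
    (X T Y₀ Y₁ : Ω → ℝ) (hX : Measurable X) (hT : Measurable T)
    (hY₀m : Measurable Y₀) (hY₁m : Measurable Y₁)
    (hY₀i : Integrable Y₀ μ) (hY₁i : Integrable Y₁ μ)
    (hTX : T =ᵐ[μ] fun ω => if 0 ≤ X ω then (1 : ℝ) else 0)
    (Y : Ω → ℝ) (hY : Y = fun ω => Y₀ ω + T ω * (Y₁ ω - Y₀ ω))
    (g₀ g₁ : ℝ → ℝ) (hg₀m : Measurable g₀) (hg₁m : Measurable g₁)
    (hg₀ : (fun ω => g₀ (X ω)) =ᵐ[μ] μ[Y₀ | MeasurableSpace.comap X (borel ℝ)])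
    (hg₁ : (fun ω => g₁ (X ω)) =ᵐ[μ] μ[Y₁ | MeasurableSpace.comap X (borel ℝ)])
    (hc₀ : ContinuousAt g₀ 0) (hc₁ : ContinuousAt g₁ 0)
    (g : ℝ → ℝ) (hg : g = fun x => if 0 ≤ x then g₁ x else g₀ x) :
    ((fun ω => g (X ω)) =ᵐ[μ] μ[Y | MeasurableSpace.comap X (borel ℝ)]) ∧
      Tendsto g (𝓝[>] (0 : ℝ)) (𝓝 (g₁ 0)) ∧
      Tendsto g (𝓝[<] (0 : ℝ)) (𝓝 (g₀ 0)) :=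
  stmt0_general μ X T Y₀ Y₁ hY₀i hY₁i hTX Y hY g₀ g₁ hg₀ hg₁ hc₀ hc₁ g hg
end

section
/- Let (Ω, 𝒜, μ) be a probability space, X, T, Y₀, Y₁ : Ω → ℝ random variables with Y₀, Y₁ integrable, T = 1{X ≥ 0} μ-almost surely, and Y := Y₀ + T·(Y₁ − Y₀). Let g₀, g₁ : ℝ → ℝ be versions of the conditional means of Y₀ and Y₁ given X, respectively, each continuous at 0, and define g(x) := g₁(x) if x ≥ 0 and g(x) := g₀(x) if x < 0. If additionally μ({X = 0}) > 0, then lim_{x↓0} g(x) − lim_{x↑0} g(x) = (∫_{{X = 0}} (Y₁ − Y₀) dμ) / μ({X = 0}); that is, the jump of the conditional mean of the observed outcome at the cutoff identifies the average treatment effect for units with X = 0. -/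
open MeasureTheory Filter Set Topology

/-! The atom `{X = 0}` is `σ(X)`-measurable and every version `gᵢ ∘ X` of `𝔼[Yᵢ | X]` is constant
`gᵢ 0` on it, so the defining property of conditional expectation gives
`∫_{X = 0} Yᵢ dμ = μ(X = 0) · gᵢ 0`. The one-sided limits of `g` are just continuity of `gᵢ` at `0`. -/

theorem setIntegral_eq_measureReal_mul_of_condExp_eq_const {Ω : Type*} {m m₀ : MeasurableSpace Ω}
    {μ : Measure Ω} (hm : m ≤ m₀) [SigmaFinite (μ.trim hm)] {Z f : Ω → ℝ} {s : Set Ω} {c : ℝ}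
    (hZ : Integrable Z μ) (hf : f =ᵐ[μ] μ[Z | m]) (hs : MeasurableSet[m] s)
    (hfs : ∀ ω ∈ s, f ω = c) :
    ∫ ω in s, Z ω ∂μ = μ.real s * c := by
  calc ∫ ω in s, Z ω ∂μ = ∫ ω in s, (μ[Z | m]) ω ∂μ := (setIntegral_condExp hm hZ hs).symm
    _ = ∫ ω in s, f ω ∂μ := setIntegral_congr_ae (hm s hs) (hf.mono fun ω hω _ => hω.symm)
    _ = ∫ _ in s, c ∂μ := setIntegral_congr_fun (hm s hs) hfs
    _ = μ.real s * c := by rw [setIntegral_const, smul_eq_mul]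

theorem setIntegral_preimage_singleton_eq_of_condExp_comap {Ω α : Type*} [MeasurableSpace Ω]
    [MeasurableSpace α] [MeasurableSingletonClass α] {μ : Measure Ω} [IsFiniteMeasure μ]
    {X : Ω → α} (hX : Measurable X) {Z : Ω → ℝ} {g : α → ℝ} (hZ : Integrable Z μ)
    (hg : (fun ω => g (X ω)) =ᵐ[μ] μ[Z | MeasurableSpace.comap X ‹_›]) (x : α) :
    ∫ ω in X ⁻¹' {x}, Z ω ∂μ = μ.real (X ⁻¹' {x}) * g x :=
  setIntegral_eq_measureReal_mul_of_condExp_eq_const hX.comap_le hZ hg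
    ⟨{x}, measurableSet_singleton x, rfl⟩ fun _ hω => congrArg g hω

theorem stmt2_general {Ω : Type*} [MeasurableSpace Ω] (μ : Measure Ω) [IsProbabilityMeasure μ]
    (X Y₀ Y₁ : Ω → ℝ) (hX : Measurable X)
    (hY₀i : Integrable Y₀ μ) (hY₁i : Integrable Y₁ μ)
    (g₀ g₁ : ℝ → ℝ)
    (hg₀ : (fun ω => g₀ (X ω)) =ᵐ[μ] μ[Y₀ | MeasurableSpace.comap X (borel ℝ)])
    (hg₁ : (fun ω => g₁ (X ω)) =ᵐ[μ] μ[Y₁ | MeasurableSpace.comap X (borel ℝ)])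
    (hc₀ : ContinuousAt g₀ 0) (hc₁ : ContinuousAt g₁ 0)
    (g : ℝ → ℝ) (hg : g = fun x => if 0 ≤ x then g₁ x else g₀ x)
    (hatom : 0 < μ {ω | X ω = 0}) :
    Tendsto g (𝓝[>] (0 : ℝ)) (𝓝 (g₁ 0)) ∧
      Tendsto g (𝓝[<] (0 : ℝ)) (𝓝 (g₀ 0)) ∧
      g₁ 0 - g₀ 0 =
        (∫ ω in {ω | X ω = 0}, (Y₁ ω - Y₀ ω) ∂μ) / (μ {ω | X ω = 0}).toReal := by
  subst hg
  refine ⟨?_, ?_, ?_⟩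
  · refine (hc₁.tendsto.mono_left nhdsWithin_le_nhds).congr' ?_
    filter_upwards [self_mem_nhdsWithin] with x (hx : 0 < x)
    simp [hx.le]
  · refine (hc₀.tendsto.mono_left nhdsWithin_le_nhds).congr' ?_
    filter_upwards [self_mem_nhdsWithin] with x (hx : x < 0)
    simp [hx.not_ge]
  · have hpos : 0 < μ.real (X ⁻¹' {0}) := ENNReal.toReal_pos hatom.ne' (measure_ne_top μ _)
    have hjump : ∫ ω in X ⁻¹' {0}, (Y₁ ω - Y₀ ω) ∂μ = μ.real (X ⁻¹' {0}) * (g₁ 0 - g₀ 0) := by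
      rw [integral_sub hY₁i.restrict hY₀i.restrict, mul_sub,
        setIntegral_preimage_singleton_eq_of_condExp_comap hX hY₁i hg₁,
        setIntegral_preimage_singleton_eq_of_condExp_comap hX hY₀i hg₀]
    change _ = (∫ ω in X ⁻¹' {0}, (Y₁ ω - Y₀ ω) ∂μ) / μ.real (X ⁻¹' {0})
    rw [hjump, mul_div_cancel_left₀ _ hpos.ne']

/-- Sharp RD with an atom at the cutoff: the jump of the conditional mean of the observed
outcome at the cutoff, `lim_{x↓0} g(x) − lim_{x↑0} g(x)`, identifies the average treatment
effect for units with `X = 0`. -/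
theorem stmt2 {Ω : Type*} [MeasurableSpace Ω] (μ : Measure Ω) [IsProbabilityMeasure μ]
    (X T Y₀ Y₁ : Ω → ℝ) (hX : Measurable X) (hT : Measurable T)
    (hY₀m : Measurable Y₀) (hY₁m : Measurable Y₁)
    (hY₀i : Integrable Y₀ μ) (hY₁i : Integrable Y₁ μ)
    (hTX : T =ᵐ[μ] fun ω => if 0 ≤ X ω then (1 : ℝ) else 0)
    (Y : Ω → ℝ) (hY : Y = fun ω => Y₀ ω + T ω * (Y₁ ω - Y₀ ω))
    (g₀ g₁ : ℝ → ℝ) (hg₀m : Measurable g₀) (hg₁m : Measurable g₁)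
    (hg₀ : (fun ω => g₀ (X ω)) =ᵐ[μ] μ[Y₀ | MeasurableSpace.comap X (borel ℝ)])
    (hg₁ : (fun ω => g₁ (X ω)) =ᵐ[μ] μ[Y₁ | MeasurableSpace.comap X (borel ℝ)])
    (hc₀ : ContinuousAt g₀ 0) (hc₁ : ContinuousAt g₁ 0)
    (g : ℝ → ℝ) (hg : g = fun x => if 0 ≤ x then g₁ x else g₀ x)
    (hatom : 0 < μ {ω | X ω = 0}) :
    Tendsto g (𝓝[>] (0 : ℝ)) (𝓝 (g₁ 0)) ∧
      Tendsto g (𝓝[<] (0 : ℝ)) (𝓝 (g₀ 0)) ∧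
      g₁ 0 - g₀ 0 =
        (∫ ω in {ω | X ω = 0}, (Y₁ ω - Y₀ ω) ∂μ) / (μ {ω | X ω = 0}).toReal :=
  stmt2_general μ X Y₀ Y₁ hX hY₀i hY₁i g₀ g₁ hg₀ hg₁ hc₀ hc₁ g hg hatom
end

section
/- Let (Ω, 𝒜, μ) be a probability space, let X : Ω → ℝ be a random variable, and let T₀, T₁ : Ω → ℝ take values in {0, 1}. Suppose 1{X ≥ 0} = Z μ-almost surely, and the observed treatment is T := Z·T₁ + (1 − Z)·T₀. Let p₀, p₁ : ℝ → ℝ be versions of the conditional means of T₀ and T₁ given X, respectively, each continuous at 0, and define p(x) := p₁(x) if x ≥ 0 and p(x) := p₀(x) if x < 0. If μ({X = 0}) > 0 and T₁ ≥ T₀ μ-almost surely on {X = 0}, then p ∘ X is a version of the conditional mean of T given X, and lim_{x↓0} p(x) − lim_{x↑0} p(x) = μ({T₁ > T₀} ∩ {X = 0}) / μ({X = 0}), i.e., the jump in the first-stage conditional mean at the cutoff identifies the conditional probability of being a complier given X = 0. -/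
/-!
On `{X ≥ 0}` the observed treatment is `T₁` and elsewhere it is `T₀`; since `{X ≥ 0}` is
`σ(X)`-measurable, conditioning commutes with this splitting, so `p ∘ X` is a version of
`E[T | X]` and the one-sided limits of `p` at `0` are `p₁ 0` and `p₀ 0` by continuity.
Because `{X = 0}` is an atom of `σ(X)` of positive mass, any version `g` of `E[W | X]` satisfies
`g 0 · μ{X = 0} = ∫_{X = 0} W`. Applied to `T₁` and `T₀`, the jump becomes
`∫_{X = 0} (T₁ - T₀) / μ{X = 0}`, and with no defiers `T₁ - T₀` is the indicator of compliers.
-/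

open MeasureTheory Filter Set Topology

section

variable {Ω : Type*} {m₀ : MeasurableSpace Ω} {μ : Measure Ω}

theorem condExp_piecewise_s5 {E : Type*} [NormedAddCommGroup E] [NormedSpace ℝ E] [CompleteSpace E]
    {m : MeasurableSpace Ω} (hm : m ≤ m₀) {S : Set Ω} [DecidablePred (· ∈ S)]
    (hS : MeasurableSet[m] S) {f g : Ω → E} (hf : Integrable f μ) (hg : Integrable g μ) :
    μ[S.piecewise f g | m] =ᵐ[μ] S.piecewise (μ[f | m]) (μ[g | m]) := by
  simp only [← indicator_add_compl_eq_piecewise]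
  filter_upwards [condExp_add (hf.indicator (hm S hS)) (hg.indicator (hm S hS).compl) m,
    condExp_indicator hf hS, condExp_indicator hg hS.compl] with ω hadd hf' hg'
  rw [hadd, Pi.add_apply, Pi.add_apply, hf', hg']

theorem setIntegral_eq_measureReal_smul_of_comp_ae_eq_condExp {E α : Type*}
    [NormedAddCommGroup E] [NormedSpace ℝ E] [CompleteSpace E]
    [MeasurableSpace α] [MeasurableSingletonClass α] [IsFiniteMeasure μ]
    {X : Ω → α} (hX : Measurable X) {W : Ω → E} (hW : Integrable W μ) {g : α → E}
    (hg : g ∘ X =ᵐ[μ] μ[W | MeasurableSpace.comap X ‹_›]) (a : α) :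
    ∫ ω in {ω | X ω = a}, W ω ∂μ = μ.real {ω | X ω = a} • g a := by
  have hA : MeasurableSet[MeasurableSpace.comap X ‹_›] {ω | X ω = a} :=
    ⟨{a}, measurableSet_singleton a, rfl⟩
  calc ∫ ω in {ω | X ω = a}, W ω ∂μ
      = ∫ ω in {ω | X ω = a}, (μ[W | MeasurableSpace.comap X ‹_›]) ω ∂μ :=
        (setIntegral_condExp hX.comap_le hW hA).symm
    _ = ∫ ω in {ω | X ω = a}, g (X ω) ∂μ :=
        setIntegral_congr_ae (hX.comap_le _ hA) (hg.mono fun ω hω _ => hω.symm)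
    _ = ∫ _ in {ω | X ω = a}, g a ∂μ :=
        setIntegral_congr_fun (hX.comap_le _ hA) fun ω (hω : X ω = a) => congrArg g hω
    _ = μ.real {ω | X ω = a} • g a := setIntegral_const _

theorem integrable_of_forall_eq_zero_or_one [IsFiniteMeasure μ] {W : Ω → ℝ}
    (hWm : Measurable W) (hW : ∀ ω, W ω = 0 ∨ W ω = 1) : Integrable W μ :=
  .of_mem_Icc 0 1 hWm.aemeasurable <| ae_of_all _ fun ω => by rcases hW ω with h | h <;> simp [h]

theorem sub_eq_ite_lt_of_eq_zero_or_one {a b : ℝ} (ha : a = 0 ∨ a = 1) (hb : b = 0 ∨ b = 1)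
    (hab : a ≤ b) : b - a = if a < b then 1 else 0 := by
  revert hab
  rcases ha with rfl | rfl <;> rcases hb with rfl | rfl <;> norm_num

theorem setIntegral_sub_eq_measureReal_lt {W₀ W₁ : Ω → ℝ} (hW₀m : Measurable W₀)
    (hW₁m : Measurable W₁) (hW₀ : ∀ ω, W₀ ω = 0 ∨ W₀ ω = 1) (hW₁ : ∀ ω, W₁ ω = 0 ∨ W₁ ω = 1)
    {s : Set Ω} (hs : MeasurableSet s) (hle : ∀ᵐ ω ∂μ, ω ∈ s → W₀ ω ≤ W₁ ω) :
    ∫ ω in s, (W₁ ω - W₀ ω) ∂μ = μ.real ({ω | W₀ ω < W₁ ω} ∩ s) := by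
  have hlt : MeasurableSet {ω | W₀ ω < W₁ ω} := measurableSet_lt hW₀m hW₁m
  calc ∫ ω in s, (W₁ ω - W₀ ω) ∂μ = ∫ ω in s, {ω | W₀ ω < W₁ ω}.indicator 1 ω ∂μ := by
        refine setIntegral_congr_ae hs (hle.mono fun ω hω hωs => ?_)
        rw [sub_eq_ite_lt_of_eq_zero_or_one (hW₀ ω) (hW₁ ω) (hω hωs)]
        rfl
    _ = μ.real ({ω | W₀ ω < W₁ ω} ∩ s) := by
        rw [integral_indicator_one hlt, measureReal_restrict_apply hlt]

end

theorem stmt5_general {Ω : Type*} [MeasurableSpace Ω] (μ : Measure Ω) [IsProbabilityMeasure μ]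
    (X T₀ T₁ Z : Ω → ℝ) (hX : Measurable X)
    (hT₀m : Measurable T₀) (hT₁m : Measurable T₁)
    (hT₀01 : ∀ ω, T₀ ω = 0 ∨ T₀ ω = 1) (hT₁01 : ∀ ω, T₁ ω = 0 ∨ T₁ ω = 1)
    (hZ : (fun ω => if 0 ≤ X ω then (1 : ℝ) else 0) =ᵐ[μ] Z)
    (T : Ω → ℝ) (hT : T = fun ω => Z ω * T₁ ω + (1 - Z ω) * T₀ ω)
    (p₀ p₁ : ℝ → ℝ)
    (hp₀ : (fun ω => p₀ (X ω)) =ᵐ[μ] μ[T₀ | MeasurableSpace.comap X (borel ℝ)])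
    (hp₁ : (fun ω => p₁ (X ω)) =ᵐ[μ] μ[T₁ | MeasurableSpace.comap X (borel ℝ)])
    (hc₀ : ContinuousAt p₀ 0) (hc₁ : ContinuousAt p₁ 0)
    (p : ℝ → ℝ) (hp : p = fun x => if 0 ≤ x then p₁ x else p₀ x)
    (hatom : 0 < μ {ω | X ω = 0})
    (hmono : ∀ᵐ ω ∂μ, X ω = 0 → T₀ ω ≤ T₁ ω) :
    ((fun ω => p (X ω)) =ᵐ[μ] μ[T | MeasurableSpace.comap X (borel ℝ)]) ∧
      Tendsto p (𝓝[>] (0 : ℝ)) (𝓝 (p₁ 0)) ∧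
      Tendsto p (𝓝[<] (0 : ℝ)) (𝓝 (p₀ 0)) ∧
      p₁ 0 - p₀ 0 =
        (μ ({ω | T₀ ω < T₁ ω} ∩ {ω | X ω = 0})).toReal / (μ {ω | X ω = 0}).toReal := by
  subst hT hp
  have hT₀i := integrable_of_forall_eq_zero_or_one (μ := μ) hT₀m hT₀01
  have hT₁i := integrable_of_forall_eq_zero_or_one (μ := μ) hT₁m hT₁01
  have hT_split : (fun ω => Z ω * T₁ ω + (1 - Z ω) * T₀ ω) =ᵐ[μ] {ω | 0 ≤ X ω}.piecewise T₁ T₀ := by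
    filter_upwards [hZ] with ω hω
    by_cases h : 0 ≤ X ω <;> simp [← hω, h]
  refine ⟨?_, ?_, ?_, ?_⟩
  · have hS : MeasurableSet[MeasurableSpace.comap X (borel ℝ)] {ω | 0 ≤ X ω} :=
      ⟨Ici 0, measurableSet_Ici, rfl⟩
    have hm : MeasurableSpace.comap X (borel ℝ) ≤ ‹_› := hX.comap_le
    filter_upwards [condExp_congr_ae hT_split, condExp_piecewise_s5 hm hS hT₁i hT₀i, hp₀, hp₁]
      with ω hT_ce hsplit_ce h₀ h₁
    rw [hT_ce, hsplit_ce]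
    by_cases hω : 0 ≤ X ω <;> simp [hω, h₀, h₁]
  · refine hc₁.tendsto.mono_left nhdsWithin_le_nhds |>.congr' ?_
    filter_upwards [self_mem_nhdsWithin] with x (hx : 0 < x)
    simp [hx.le]
  · refine hc₀.tendsto.mono_left nhdsWithin_le_nhds |>.congr' ?_
    filter_upwards [self_mem_nhdsWithin] with x (hx : x < 0)
    simp [hx.not_ge]
  · have hs : MeasurableSet {ω | X ω = 0} := hX (measurableSet_singleton 0)
    have hpos : (μ {ω | X ω = 0}).toReal ≠ 0 := (ENNReal.toReal_pos hatom.ne' (by finiteness)).ne'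
    have k₀ := setIntegral_eq_measureReal_smul_of_comp_ae_eq_condExp hX hT₀i hp₀ 0
    have k₁ := setIntegral_eq_measureReal_smul_of_comp_ae_eq_condExp hX hT₁i hp₁ 0
    rw [eq_div_iff hpos, ← measureReal_def, ← measureReal_def,
      ← setIntegral_sub_eq_measureReal_lt hT₀m hT₁m hT₀01 hT₁01 hs hmono,
      integral_sub hT₁i.restrict hT₀i.restrict, k₀, k₁, smul_eq_mul, smul_eq_mul]
    ring

/-- Fuzzy RD, first stage: with treatment assignment `Z = 1{X ≥ 0}` a.s. and observed treatment
`T = Z T₁ + (1 - Z) T₀`, if `p₀, p₁` are versions of the conditional means of `T₀` and `T₁`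
given `X`, continuous at `0`, there are no defiers on `{X = 0}` and `μ{X = 0} > 0`, then
`p ∘ X` is a version of the conditional mean of `T` given `X`, and the jump of `p` at the
cutoff identifies the conditional probability of being a complier given `X = 0`. -/
theorem stmt5 {Ω : Type*} [MeasurableSpace Ω] (μ : Measure Ω) [IsProbabilityMeasure μ]
    (X T₀ T₁ Z : Ω → ℝ) (hX : Measurable X)
    (hT₀m : Measurable T₀) (hT₁m : Measurable T₁) (hZm : Measurable Z)
    (hT₀01 : ∀ ω, T₀ ω = 0 ∨ T₀ ω = 1) (hT₁01 : ∀ ω, T₁ ω = 0 ∨ T₁ ω = 1)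
    (hZ : (fun ω => if 0 ≤ X ω then (1 : ℝ) else 0) =ᵐ[μ] Z)
    (T : Ω → ℝ) (hT : T = fun ω => Z ω * T₁ ω + (1 - Z ω) * T₀ ω)
    (p₀ p₁ : ℝ → ℝ) (hp₀m : Measurable p₀) (hp₁m : Measurable p₁)
    (hp₀ : (fun ω => p₀ (X ω)) =ᵐ[μ] μ[T₀ | MeasurableSpace.comap X (borel ℝ)])
    (hp₁ : (fun ω => p₁ (X ω)) =ᵐ[μ] μ[T₁ | MeasurableSpace.comap X (borel ℝ)])
    (hc₀ : ContinuousAt p₀ 0) (hc₁ : ContinuousAt p₁ 0)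
    (p : ℝ → ℝ) (hp : p = fun x => if 0 ≤ x then p₁ x else p₀ x)
    (hatom : 0 < μ {ω | X ω = 0})
    (hmono : ∀ᵐ ω ∂μ, X ω = 0 → T₀ ω ≤ T₁ ω) :
    ((fun ω => p (X ω)) =ᵐ[μ] μ[T | MeasurableSpace.comap X (borel ℝ)]) ∧
      Tendsto p (𝓝[>] (0 : ℝ)) (𝓝 (p₁ 0)) ∧
      Tendsto p (𝓝[<] (0 : ℝ)) (𝓝 (p₀ 0)) ∧
      p₁ 0 - p₀ 0 =
        (μ ({ω | T₀ ω < T₁ ω} ∩ {ω | X ω = 0})).toReal / (μ {ω | X ω = 0}).toReal :=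
  stmt5_general μ X T₀ T₁ Z hX hT₀m hT₁m hT₀01 hT₁01 hZ T hT p₀ p₁ hp₀ hp₁ hc₀ hc₁ p hp hatom hmono
end

section
/- Let r ≥ 1 be a natural number and R > 0. Let f : ℝ × ℝ → ℝ satisfy f(e, x) = 0 whenever |e| > R, and suppose all mixed partial derivatives ∂_e^u ∂_x^v f with u + v ≤ r exist, are bounded, and are jointly continuous on ℝ². Let h : ℝ → ℝ be bounded and measurable. Then the function g(x) := ∫_ℝ h(y) f(y − x, x) dy is r-times differentiable at every x ∈ ℝ, and its r-th derivative satisfies g^{(r)}(x) = Σ_{u=0}^{r} binom(r, u) (−1)^u ∫_ℝ h(y) (∂_e^u ∂_x^{r−u} f)(y − x, x) dy. -/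
open MeasureTheory Filter Set Topology

/-!
Continuous partial derivatives make a kernel `φ` strictly differentiable, so by the chain rule
`x ↦ h y * φ (y - x, x)` has derivative `h y * (-∂ₑφ + ∂ₓφ) (y - x, x)`. All mixed partials vanish
for `|e| > R`, so for `x` near `x₀` these integrands are supported in a fixed compact interval of
`y`, where continuity bounds them; dominated convergence then allows differentiation under the
integral. Each differentiation turns `∂ₑᵘ∂ₓᵛ` into `-∂ₑᵘ⁺¹∂ₓᵛ + ∂ₑᵘ∂ₓᵛ⁺¹`, and Pascal's rule
collects the terms into the binomial sum.
-/

section PartialDerivatives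

variable {φ A B : ℝ × ℝ → ℝ}

theorem hasStrictFDerivAt_of_hasDerivAt_partial
    (hA : ∀ e x, HasDerivAt (fun e' => φ (e', x)) (A (e, x)) e)
    (hB : ∀ e x, HasDerivAt (fun x' => φ (e, x')) (B (e, x)) x)
    (hAc : Continuous A) (hBc : Continuous B) (q : ℝ × ℝ) :
    HasStrictFDerivAt φ
      (A q • ContinuousLinearMap.fst ℝ ℝ ℝ + B q • ContinuousLinearMap.snd ℝ ℝ ℝ) q := by
  have key := hasStrictFDerivAt_uncurry_coprod (u := q) (f := fun e x => φ (e, x))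
    (f₁ := fun e x => ContinuousLinearMap.toSpanSingleton ℝ (A (e, x)))
    (f₂ := fun e x => ContinuousLinearMap.toSpanSingleton ℝ (B (e, x)))
    (.of_forall fun v => hasDerivAt_iff_hasFDerivAt.1 (hA v.1 v.2))
    (.of_forall fun v => hasDerivAt_iff_hasFDerivAt.1 (hB v.1 v.2))
    (ContinuousLinearMap.toSpanSingletonCLE.continuous.comp hAc).continuousAt
    (ContinuousLinearMap.toSpanSingletonCLE.continuous.comp hBc).continuousAt
  refine key.congr_fderiv ?_
  ext <;> simp [Function.HasUncurry.uncurry]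

theorem hasDerivAt_comp_sub_pair
    (hA : ∀ e x, HasDerivAt (fun e' => φ (e', x)) (A (e, x)) e)
    (hB : ∀ e x, HasDerivAt (fun x' => φ (e, x')) (B (e, x)) x)
    (hAc : Continuous A) (hBc : Continuous B) (y x : ℝ) :
    HasDerivAt (fun x' => φ (y - x', x')) (-A (y - x, x) + B (y - x, x)) x := by
  have hpath : HasDerivAt (fun x' : ℝ => (y - x', x')) (-1, 1) x :=
    ((hasDerivAt_id x).const_sub y).prodMk (hasDerivAt_id x)
  have hφ := (hasStrictFDerivAt_of_hasDerivAt_partial hA hB hAc hBc (y - x, x)).hasFDerivAt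
  refine (hφ.comp_hasDerivAt (f := fun x' : ℝ => (y - x', x')) x hpath).congr_deriv ?_
  simp

theorem eq_zero_of_hasDerivAt_fst_of_lt_abs {R : ℝ} (hφ : ∀ e x, R < |e| → φ (e, x) = 0)
    (hA : ∀ e x, HasDerivAt (fun e' => φ (e', x)) (A (e, x)) e) :
    ∀ e x, R < |e| → A (e, x) = 0 := by
  intro e x he
  refine (hA e x).unique ((hasDerivAt_const e 0).congr_of_eventuallyEq ?_)
  filter_upwards [(isOpen_lt continuous_const continuous_abs).mem_nhds he] with e' he'
  exact hφ e' x he'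

theorem eq_zero_of_hasDerivAt_snd_of_lt_abs {R : ℝ} (hφ : ∀ e x, R < |e| → φ (e, x) = 0)
    (hB : ∀ e x, HasDerivAt (fun x' => φ (e, x')) (B (e, x)) x) :
    ∀ e x, R < |e| → B (e, x) = 0 := fun e x he =>
  (hB e x).unique ((hasDerivAt_const x 0).congr_of_eventuallyEq (.of_forall fun x' => hφ e x' he))

end PartialDerivatives

theorem mixedPartial_eq_zero_of_lt_abs {r : ℕ} {R : ℝ} {D : ℕ → ℕ → ℝ × ℝ → ℝ}
    (hD0 : ∀ e x, R < |e| → D 0 0 (e, x) = 0)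
    (hDe : ∀ u v : ℕ, u + 1 + v ≤ r →
      ∀ e x : ℝ, HasDerivAt (fun e' => D u v (e', x)) (D (u + 1) v (e, x)) e)
    (hDx : ∀ u v : ℕ, u + (v + 1) ≤ r →
      ∀ e x : ℝ, HasDerivAt (fun x' => D u v (e, x')) (D u (v + 1) (e, x)) x) :
    ∀ u v, u + v ≤ r → ∀ e x, R < |e| → D u v (e, x) = 0 := by
  intro u
  induction u with
  | zero =>
    intro v
    induction v with
    | zero => exact fun _ => hD0
    | succ v ih =>
      exact fun hv => eq_zero_of_hasDerivAt_snd_of_lt_abs (ih (by omega)) (hDx 0 v hv)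
  | succ u ih =>
    exact fun v hv => eq_zero_of_hasDerivAt_fst_of_lt_abs (ih v (by omega)) (hDe u v hv)

noncomputable def kernelIntegral (h : ℝ → ℝ) (φ : ℝ × ℝ → ℝ) (x : ℝ) : ℝ :=
  ∫ y, h y * φ (y - x, x)

section KernelIntegral

variable {h : ℝ → ℝ} {C R : ℝ} {φ A B : ℝ × ℝ → ℝ}

theorem integrable_mul_comp_sub_pair (hhm : Measurable h) (hhb : ∀ y, |h y| ≤ C)
    (hφc : Continuous φ) (hφ : ∀ e x, R < |e| → φ (e, x) = 0) (x : ℝ) :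
    Integrable (fun y => h y * φ (y - x, x)) := by
  have hsupp : HasCompactSupport fun y => φ (y - x, x) :=
    .intro (isCompact_closedBall x R) fun y hy =>
      hφ _ _ (by simpa [Real.dist_eq] using hy)
  exact ((by fun_prop : Continuous fun y => φ (y - x, x)).integrable_of_hasCompactSupport
    hsupp).bdd_mul hhm.aestronglyMeasurable (.of_forall hhb)

theorem exists_norm_mul_comp_sub_pair_le_indicator (hhb : ∀ y, |h y| ≤ C)
    (hφc : Continuous φ) (hφ : ∀ e x, R < |e| → φ (e, x) = 0) (x₀ : ℝ) :
    ∃ c, ∀ y, ∀ x ∈ Metric.ball x₀ 1,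
      ‖h y * φ (y - x, x)‖ ≤ (Metric.closedBall x₀ (R + 1)).indicator (fun _ => C * c) y := by
  obtain ⟨c, hc⟩ := ((isCompact_closedBall x₀ (R + 1)).prod (isCompact_closedBall x₀ 1))
    |>.exists_bound_of_continuousOn (f := fun p : ℝ × ℝ => φ (p.1 - p.2, p.2)) (by fun_prop)
  refine ⟨c, fun y x hx => ?_⟩
  by_cases hy : y ∈ Metric.closedBall x₀ (R + 1)
  · rw [indicator_of_mem hy, norm_mul]
    exact mul_le_mul (hhb y) (hc (y, x) ⟨hy, Metric.ball_subset_closedBall hx⟩)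
      (norm_nonneg _) ((abs_nonneg _).trans (hhb y))
  · have hyx : R < |y - x| := by
      rw [Metric.mem_closedBall, Real.dist_eq, not_le] at hy
      rw [Metric.mem_ball, Real.dist_eq] at hx
      linarith [abs_sub_le y x x₀, abs_sub_comm x x₀]
    simp [indicator_of_notMem hy, hφ _ _ hyx]

theorem hasDerivAt_kernelIntegral (hhm : Measurable h) (hhb : ∀ y, |h y| ≤ C)
    (hA : ∀ e x, HasDerivAt (fun e' => φ (e', x)) (A (e, x)) e)
    (hB : ∀ e x, HasDerivAt (fun x' => φ (e, x')) (B (e, x)) x)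
    (hAc : Continuous A) (hBc : Continuous B) (hφ : ∀ e x, R < |e| → φ (e, x) = 0) (x₀ : ℝ) :
    HasDerivAt (kernelIntegral h φ) (-kernelIntegral h A x₀ + kernelIntegral h B x₀) x₀ := by
  have hφc : Continuous φ := continuous_iff_continuousAt.2 fun q =>
    (hasStrictFDerivAt_of_hasDerivAt_partial hA hB hAc hBc q).continuousAt
  have hA0 := eq_zero_of_hasDerivAt_fst_of_lt_abs hφ hA
  have hB0 := eq_zero_of_hasDerivAt_snd_of_lt_abs hφ hB
  set ψ : ℝ × ℝ → ℝ := fun q => -A q + B q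
  have hψc : Continuous ψ := by fun_prop
  have hψ : ∀ e x, R < |e| → ψ (e, x) = 0 := fun e x he => by simp [ψ, hA0 e x he, hB0 e x he]
  obtain ⟨c, hbound⟩ := exists_norm_mul_comp_sub_pair_le_indicator hhb hψc hψ x₀
  have key := hasDerivAt_integral_of_dominated_loc_of_deriv_le (μ := volume)
    (F := fun x y => h y * φ (y - x, x)) (F' := fun x y => h y * ψ (y - x, x))
    (Metric.ball_mem_nhds x₀ one_pos)
    (.of_forall fun x => (integrable_mul_comp_sub_pair hhm hhb hφc hφ x).aestronglyMeasurable)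
    (integrable_mul_comp_sub_pair hhm hhb hφc hφ x₀)
    (integrable_mul_comp_sub_pair hhm hhb hψc hψ x₀).aestronglyMeasurable
    (.of_forall hbound)
    ((integrable_indicator_iff measurableSet_closedBall).2
      (integrableOn_const measure_closedBall_lt_top.ne))
    (.of_forall fun y x _ => (hasDerivAt_comp_sub_pair hA hB hAc hBc y x).const_mul (h y))
  refine (key.2 : HasDerivAt (kernelIntegral h φ) _ x₀).congr_deriv ?_
  calc ∫ y, h y * ψ (y - x₀, x₀)
      = ∫ y, (h y * B (y - x₀, x₀) - h y * A (y - x₀, x₀)) := by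
        congr 1 with y
        ring
    _ = -kernelIntegral h A x₀ + kernelIntegral h B x₀ := by
        rw [integral_sub (integrable_mul_comp_sub_pair hhm hhb hBc hB0 x₀)
          (integrable_mul_comp_sub_pair hhm hhb hAc hA0 x₀), kernelIntegral, kernelIntegral]
        ring

end KernelIntegral

noncomputable def binomialKernelSum (h : ℝ → ℝ) (D : ℕ → ℕ → ℝ × ℝ → ℝ) (k : ℕ) (x : ℝ) : ℝ :=
  ∑ u ∈ Finset.range (k + 1), (k.choose u : ℝ) * (-1) ^ u * kernelIntegral h (D u (k - u)) x

section BinomialKernelSum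

variable {r : ℕ} {C R : ℝ} {h : ℝ → ℝ} {D : ℕ → ℕ → ℝ × ℝ → ℝ}

theorem hasDerivAt_binomialKernelSum (hhm : Measurable h) (hhb : ∀ y, |h y| ≤ C)
    (hDe : ∀ u v : ℕ, u + 1 + v ≤ r →
      ∀ e x : ℝ, HasDerivAt (fun e' => D u v (e', x)) (D (u + 1) v (e, x)) e)
    (hDx : ∀ u v : ℕ, u + (v + 1) ≤ r →
      ∀ e x : ℝ, HasDerivAt (fun x' => D u v (e, x')) (D u (v + 1) (e, x)) x)
    (hDc : ∀ u v : ℕ, u + v ≤ r → Continuous (D u v))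
    (hDsupp : ∀ u v, u + v ≤ r → ∀ e x, R < |e| → D u v (e, x) = 0)
    {k : ℕ} (hk : k + 1 ≤ r) (x : ℝ) :
    HasDerivAt (binomialKernelSum h D k) (binomialKernelSum h D (k + 1) x) x := by
  set T : ℕ → ℕ → ℝ := fun i j => (-1) ^ i * kernelIntegral h (D i j) x
  have hterm : ∀ u ∈ Finset.range (k + 1),
      HasDerivAt (fun x => (k.choose u : ℝ) * (-1) ^ u * kernelIntegral h (D u (k - u)) x)
        ((k.choose u : ℝ) * (T u (k + 1 - u) + T (u + 1) (k - u))) x := by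
    intro u hu
    have hu : u ≤ k := Finset.mem_range_succ_iff.1 hu
    have hI := hasDerivAt_kernelIntegral hhm hhb (hDe u (k - u) (by omega))
      (hDx u (k - u) (by omega)) (hDc _ _ (by omega)) (hDc _ _ (by omega))
      (hDsupp u (k - u) (by omega)) x
    refine (hI.const_mul _).congr_deriv ?_
    rw [show k + 1 - u = k - u + 1 by omega]
    simp only [T, pow_succ]
    ring
  refine (HasDerivAt.fun_sum hterm).congr_deriv ?_
  calc ∑ u ∈ Finset.range (k + 1), (k.choose u : ℝ) * (T u (k + 1 - u) + T (u + 1) (k - u))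
      = ∑ u ∈ Finset.range (k + 2), ((k + 1).choose u : ℝ) * T u (k + 1 - u) := by
        rw [Finset.sum_choose_succ_mul, ← Finset.sum_add_distrib]
        simp only [mul_add]
    _ = binomialKernelSum h D (k + 1) x := by simp only [binomialKernelSum, T, mul_assoc]

theorem iteratedDeriv_kernelIntegral (hhm : Measurable h) (hhb : ∀ y, |h y| ≤ C)
    (hDe : ∀ u v : ℕ, u + 1 + v ≤ r →
      ∀ e x : ℝ, HasDerivAt (fun e' => D u v (e', x)) (D (u + 1) v (e, x)) e)
    (hDx : ∀ u v : ℕ, u + (v + 1) ≤ r →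
      ∀ e x : ℝ, HasDerivAt (fun x' => D u v (e, x')) (D u (v + 1) (e, x)) x)
    (hDc : ∀ u v : ℕ, u + v ≤ r → Continuous (D u v))
    (hDsupp : ∀ u v, u + v ≤ r → ∀ e x, R < |e| → D u v (e, x) = 0) :
    ∀ k ≤ r, iteratedDeriv k (kernelIntegral h (D 0 0)) = binomialKernelSum h D k := by
  intro k
  induction k with
  | zero => intro _; funext x; simp [binomialKernelSum]
  | succ k ih =>
    intro hk
    funext x
    rw [iteratedDeriv_succ, ih (by omega)]
    exact (hasDerivAt_binomialKernelSum hhm hhb hDe hDx hDc hDsupp hk x).deriv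

end BinomialKernelSum

theorem stmt11_general (r : ℕ) (R : ℝ)
    (f : ℝ × ℝ → ℝ) (hsupp : ∀ e x : ℝ, R < |e| → f (e, x) = 0)
    (D : ℕ → ℕ → ℝ × ℝ → ℝ) (hD0 : D 0 0 = f)
    (hDe : ∀ u v : ℕ, u + 1 + v ≤ r →
      ∀ e x : ℝ, HasDerivAt (fun e' => D u v (e', x)) (D (u + 1) v (e, x)) e)
    (hDx : ∀ u v : ℕ, u + (v + 1) ≤ r →
      ∀ e x : ℝ, HasDerivAt (fun x' => D u v (e, x')) (D u (v + 1) (e, x)) x)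
    (hDc : ∀ u v : ℕ, u + v ≤ r → Continuous (D u v))
    (h : ℝ → ℝ) (hhm : Measurable h) (hhb : ∃ c : ℝ, ∀ x, |h x| ≤ c)
    (g : ℝ → ℝ) (hg : g = fun x => ∫ y : ℝ, h y * f (y - x, x)) :
    (∀ k < r, Differentiable ℝ (iteratedDeriv k g)) ∧
      ∀ x : ℝ, iteratedDeriv r g x =
        ∑ u ∈ Finset.range (r + 1),
          (r.choose u : ℝ) * (-1 : ℝ) ^ u * ∫ y : ℝ, h y * D u (r - u) (y - x, x) := by
  obtain ⟨C, hC⟩ := hhb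
  subst hD0
  have hDsupp := mixedPartial_eq_zero_of_lt_abs hsupp hDe hDx
  have hderiv : ∀ k ≤ r, iteratedDeriv k g = binomialKernelSum h D k := by
    rw [hg]
    exact iteratedDeriv_kernelIntegral hhm hC hDe hDx hDc hDsupp
  refine ⟨fun k hk => ?_, fun x => ?_⟩
  · rw [hderiv k hk.le]
    exact fun x => (hasDerivAt_binomialKernelSum hhm hC hDe hDx hDc hDsupp hk x).differentiableAt
  · rw [hderiv r le_rfl]
    rfl

/-- Repeated differentiation under the integral sign: if `f(e, x)` vanishes for `|e| > R` and
has bounded, jointly continuous mixed partial derivatives `D u v = ∂_e^u ∂_x^v f` for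
`u + v ≤ r`, and `h` is bounded and measurable, then `g(x) = ∫ h(y) f(y − x, x) dy` is
`r`-times differentiable and its `r`-th derivative is the binomial expansion over mixed
partials. -/
theorem stmt11 (r : ℕ) (hr : 1 ≤ r) (R : ℝ) (hR : 0 < R)
    (f : ℝ × ℝ → ℝ) (hsupp : ∀ e x : ℝ, R < |e| → f (e, x) = 0)
    (D : ℕ → ℕ → ℝ × ℝ → ℝ) (hD0 : D 0 0 = f)
    (hDe : ∀ u v : ℕ, u + 1 + v ≤ r →
      ∀ e x : ℝ, HasDerivAt (fun e' => D u v (e', x)) (D (u + 1) v (e, x)) e)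
    (hDx : ∀ u v : ℕ, u + (v + 1) ≤ r →
      ∀ e x : ℝ, HasDerivAt (fun x' => D u v (e, x')) (D u (v + 1) (e, x)) x)
    (hDbdd : ∀ u v : ℕ, u + v ≤ r → ∃ c : ℝ, ∀ q : ℝ × ℝ, |D u v q| ≤ c)
    (hDc : ∀ u v : ℕ, u + v ≤ r → Continuous (D u v))
    (h : ℝ → ℝ) (hhm : Measurable h) (hhb : ∃ c : ℝ, ∀ x, |h x| ≤ c)
    (g : ℝ → ℝ) (hg : g = fun x => ∫ y : ℝ, h y * f (y - x, x)) :
    (∀ k < r, Differentiable ℝ (iteratedDeriv k g)) ∧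
      ∀ x : ℝ, iteratedDeriv r g x =
        ∑ u ∈ Finset.range (r + 1),
          (r.choose u : ℝ) * (-1 : ℝ) ^ u * ∫ y : ℝ, h y * D u (r - u) (y - x, x) :=
  stmt11_general r R f hsupp D hD0 hDe hDx hDc h hhm hhb g hg
end

section
/- Let (Ω, 𝒜, μ) be a probability space and let X, e : Ω → ℝ be bounded random variables. Let q be a natural number, and suppose that for each j = 1, …, q there is a polynomial function m_j : ℝ → ℝ of degree at most j such that m_j ∘ X is a version of the conditional expectation of e^j given the σ-algebra generated by X (with m_0 := 1). Let g* : ℝ → ℝ be a polynomial function of degree at most q. Then there exists a polynomial function G : ℝ → ℝ of degree at most q such that G ∘ X is a version of the conditional expectation of g*(X + e) given the σ-algebra generated by X; explicitly, writing g*(x) = Σ_{j=0}^{q} a_j x^j, one may take G(x) = Σ_{j=0}^{q} a_j Σ_{k=0}^{j} binom(j, k) x^{j−k} m_k(x). -/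
open MeasureTheory Filter

/-! The binomial theorem writes `g*(X + e)` as a combination of the terms `X ^ (j - k) * e ^ k`.
Pulling the `σ(X)`-measurable factor `X ^ (j - k)` out of the conditional expectation leaves the
conditional moment `E[e ^ k | X] = m_k(X)`, so `E[g*(X + e) | X] = G(X)`, and `G` has degree at
most `q` because `x ^ (j - k) * m_k(x)` has degree at most `j`. -/

section PolynomialFunction

variable {R : Type*} [CommSemiring R]

def IsPolynomialFunctionOfDegreeLE (f : R → R) (n : ℕ) : Prop :=
  ∃ p : Polynomial R, p.natDegree ≤ n ∧ ∀ x, f x = p.eval x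

namespace IsPolynomialFunctionOfDegreeLE

theorem mono {f : R → R} {m n : ℕ} (hf : IsPolynomialFunctionOfDegreeLE f m) (hmn : m ≤ n) :
    IsPolynomialFunctionOfDegreeLE f n :=
  let ⟨p, hp, hfp⟩ := hf
  ⟨p, hp.trans hmn, hfp⟩

theorem const (c : R) : IsPolynomialFunctionOfDegreeLE (fun _ => c) 0 :=
  ⟨Polynomial.C c, (Polynomial.natDegree_C c).le, fun _ => (Polynomial.eval_C).symm⟩

theorem pow (k : ℕ) : IsPolynomialFunctionOfDegreeLE (fun x : R => x ^ k) k :=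
  ⟨Polynomial.X ^ k, Polynomial.natDegree_X_pow_le k, fun x => by simp⟩

theorem const_mul {f : R → R} {n : ℕ} (c : R) (hf : IsPolynomialFunctionOfDegreeLE f n) :
    IsPolynomialFunctionOfDegreeLE (fun x => c * f x) n :=
  let ⟨p, hp, hfp⟩ := hf
  ⟨Polynomial.C c * p, (Polynomial.natDegree_C_mul_le c p).trans hp, fun x => by simp [hfp]⟩

theorem mul {f g : R → R} {m n : ℕ} (hf : IsPolynomialFunctionOfDegreeLE f m)
    (hg : IsPolynomialFunctionOfDegreeLE g n) :
    IsPolynomialFunctionOfDegreeLE (fun x => f x * g x) (m + n) :=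
  let ⟨p, hp, hfp⟩ := hf
  let ⟨r, hr, hgr⟩ := hg
  ⟨p * r, Polynomial.natDegree_mul_le.trans (add_le_add hp hr), fun x => by simp [hfp, hgr]⟩

theorem sum {ι : Type*} {s : Finset ι} {f : ι → R → R} {n : ℕ}
    (hf : ∀ i ∈ s, IsPolynomialFunctionOfDegreeLE (f i) n) :
    IsPolynomialFunctionOfDegreeLE (fun x => ∑ i ∈ s, f i x) n := by
  choose p hp hfp using hf
  refine ⟨∑ i ∈ s.attach, p i.1 i.2,
    Polynomial.natDegree_sum_le_of_forall_le _ _ fun i _ => hp i.1 i.2, fun x => ?_⟩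
  show ∑ i ∈ s, f i x = _
  rw [Polynomial.eval_finsetSum, ← s.sum_attach]
  exact Finset.sum_congr rfl fun i _ => hfp i.1 i.2 x

end IsPolynomialFunctionOfDegreeLE

theorem isPolynomialFunctionOfDegreeLE_binomial_sum {m : ℕ → R → R} {j : ℕ}
    (hm : ∀ k ≤ j, IsPolynomialFunctionOfDegreeLE (m k) k) :
    IsPolynomialFunctionOfDegreeLE
      (fun x => ∑ k ∈ Finset.range (j + 1), (j.choose k : R) * x ^ (j - k) * m k x) j :=
  IsPolynomialFunctionOfDegreeLE.sum fun k hk => by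
    have hkj : k ≤ j := Nat.lt_succ_iff.mp (Finset.mem_range.mp hk)
    have := ((IsPolynomialFunctionOfDegreeLE.pow (j - k)).const_mul (j.choose k : R)).mul
      (hm k hkj)
    rwa [Nat.sub_add_cancel hkj] at this

end PolynomialFunction

section ConditionalMoments

variable {Ω : Type*} {m m₀ : MeasurableSpace Ω} {μ : Measure Ω}

theorem condExp_finsetSum_mul_ae_eq {ι : Type*} {s : Finset ι} (c : ι → ℝ) {f g : ι → Ω → ℝ}
    (hf : ∀ i ∈ s, Integrable (f i) μ) (hfg : ∀ i ∈ s, μ[f i | m] =ᵐ[μ] g i) :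
    μ[fun ω => ∑ i ∈ s, c i * f i ω | m] =ᵐ[μ] fun ω => ∑ i ∈ s, c i * g i ω := by
  have hsum : (fun ω => ∑ i ∈ s, c i * f i ω) = ∑ i ∈ s, c i • f i := by
    ext ω
    simp [Finset.sum_apply]
  have hsmul : ∀ i ∈ s, μ[c i • f i | m] =ᵐ[μ] c i • g i :=
    fun i hi => (condExp_smul _ _ _).trans ((hfg i hi).const_smul (c i))
  rw [hsum]
  filter_upwards [condExp_finsetSum (fun i hi => (hf i hi).smul (c i)) m,
    (eventually_all_finset s).2 hsmul] with ω hω hω'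
  rw [hω, Finset.sum_apply]
  exact Finset.sum_congr rfl fun i hi => by simpa using hω' i hi

variable [IsFiniteMeasure μ] {X e : Ω → ℝ} {cX ce : ℝ}

theorem integrable_pow_mul_pow (hX : Measurable X) (he : Measurable e)
    (hcX : ∀ ω, |X ω| ≤ cX) (hce : ∀ ω, |e ω| ≤ ce) (i k : ℕ) :
    Integrable (fun ω => X ω ^ i * e ω ^ k) μ := by
  refine .of_bound ((hX.pow_const i).mul (he.pow_const k)).aestronglyMeasurable
    (cX ^ i * ce ^ k) (ae_of_all _ fun ω => ?_)
  rw [Real.norm_eq_abs, abs_mul, abs_pow, abs_pow]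
  have hcX0 : 0 ≤ cX := (abs_nonneg _).trans (hcX ω)
  gcongr
  exacts [hcX ω, hce ω]

theorem integrable_add_pow (hX : Measurable X) (he : Measurable e)
    (hcX : ∀ ω, |X ω| ≤ cX) (hce : ∀ ω, |e ω| ≤ ce) (j : ℕ) :
    Integrable (fun ω => (X ω + e ω) ^ j) μ := by
  refine .of_bound ((hX.add he).pow_const j).aestronglyMeasurable
    ((cX + ce) ^ j) (ae_of_all _ fun ω => ?_)
  rw [Real.norm_eq_abs, abs_pow]
  exact pow_le_pow_left₀ (abs_nonneg _) ((abs_add_le _ _).trans (add_le_add (hcX ω) (hce ω))) j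

theorem condExp_add_pow_ae_eq (hm : m ≤ m₀) (hX : Measurable[m] X) (he : Measurable e)
    (hcX : ∀ ω, |X ω| ≤ cX) (hce : ∀ ω, |e ω| ≤ ce) {M : ℕ → Ω → ℝ} {j : ℕ}
    (hM : ∀ k ≤ j, μ[fun ω => e ω ^ k | m] =ᵐ[μ] M k) :
    μ[fun ω => (X ω + e ω) ^ j | m] =ᵐ[μ]
      fun ω => ∑ k ∈ Finset.range (j + 1), (j.choose k : ℝ) * (X ω ^ (j - k) * M k ω) := by
  have hX₀ : Measurable X := hX.mono hm le_rfl
  have hbinom : (fun ω => (X ω + e ω) ^ j) =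
      fun ω => ∑ k ∈ Finset.range (j + 1), (j.choose k : ℝ) * (X ω ^ (j - k) * e ω ^ k) := by
    ext ω
    rw [add_comm, add_pow]
    exact Finset.sum_congr rfl fun k _ => by ring
  rw [hbinom]
  refine condExp_finsetSum_mul_ae_eq _
    (fun k _ => integrable_pow_mul_pow hX₀ he hcX hce _ _) fun k hk => ?_
  have hkj : k ≤ j := Nat.lt_succ_iff.mp (Finset.mem_range.mp hk)
  have hek : Integrable (fun ω => e ω ^ k) μ := by
    simpa using integrable_pow_mul_pow (μ := μ) hX₀ he hcX hce 0 k
  filter_upwards [condExp_mul_of_stronglyMeasurable_left (μ := μ)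
    (hX.pow_const (j - k)).stronglyMeasurable (integrable_pow_mul_pow hX₀ he hcX hce _ _) hek,
    hM k hkj] with ω hω hMω
  rw [← hMω]
  exact hω

end ConditionalMoments

/-- Parametric polynomial specification: if the latent conditional mean `g*` is a polynomial of
degree at most `q` and the conditional moments `E[e^j | X] = m_j(X)` are polynomials of degree
at most `j` for `j = 1, …, q` (with `m₀ := 1`), then the conditional mean of `g*(X + e)` given
`X` is the polynomial `G(x) = Σ_j a_j Σ_k binom(j,k) x^{j−k} m_k(x)` of degree at most `q`. -/
theorem stmt12 {Ω : Type*} [MeasurableSpace Ω] (μ : Measure Ω) [IsProbabilityMeasure μ]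
    (X e : Ω → ℝ) (hX : Measurable X) (he : Measurable e)
    (hXb : ∃ c : ℝ, ∀ ω, |X ω| ≤ c) (heb : ∃ c : ℝ, ∀ ω, |e ω| ≤ c)
    (q : ℕ) (m : ℕ → ℝ → ℝ) (hm0 : ∀ x, m 0 x = 1)
    (hmpoly : ∀ j, 1 ≤ j → j ≤ q →
      ∃ p : Polynomial ℝ, p.natDegree ≤ j ∧ ∀ x, m j x = p.eval x)
    (hmcond : ∀ j, 1 ≤ j → j ≤ q →
      (fun ω => m j (X ω)) =ᵐ[μ] μ[(fun ω => e ω ^ j) | MeasurableSpace.comap X (borel ℝ)])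
    (a : ℕ → ℝ) (gstar : ℝ → ℝ)
    (hgstar : ∀ x, gstar x = ∑ j ∈ Finset.range (q + 1), a j * x ^ j)
    (G : ℝ → ℝ)
    (hG : G = fun x => ∑ j ∈ Finset.range (q + 1), a j *
      ∑ k ∈ Finset.range (j + 1), (j.choose k : ℝ) * x ^ (j - k) * m k x) :
    (∃ P : Polynomial ℝ, P.natDegree ≤ q ∧ ∀ x, G x = P.eval x) ∧
      (fun ω => G (X ω)) =ᵐ[μ]
        μ[(fun ω => gstar (X ω + e ω)) | MeasurableSpace.comap X (borel ℝ)] := by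
  obtain ⟨cX, hcX⟩ := hXb
  obtain ⟨ce, hce⟩ := heb
  have hle : MeasurableSpace.comap X (borel ℝ) ≤ ‹_› := hX.comap_le
  have hXσ : Measurable[MeasurableSpace.comap X (borel ℝ)] X := Measurable.of_comap_le le_rfl
  have hmPoly : ∀ k ≤ q, IsPolynomialFunctionOfDegreeLE (m k) k := fun k hk => by
    rcases k.eq_zero_or_pos with rfl | hk0
    · simpa [funext hm0] using IsPolynomialFunctionOfDegreeLE.const (1 : ℝ)
    · exact hmpoly k hk0 hk
  have hmMoment : ∀ k ≤ q, μ[fun ω => e ω ^ k | MeasurableSpace.comap X (borel ℝ)] =ᵐ[μ]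
      fun ω => m k (X ω) := fun k hk => by
    rcases k.eq_zero_or_pos with rfl | hk0
    · simp [hm0, condExp_const hle]
    · exact (hmcond k hk0 hk).symm
  subst hG
  refine ⟨IsPolynomialFunctionOfDegreeLE.sum fun j hj => ?_, ?_⟩
  · have hjq : j ≤ q := Nat.lt_succ_iff.mp (Finset.mem_range.mp hj)
    exact ((isPolynomialFunctionOfDegreeLE_binomial_sum fun k hk =>
      hmPoly k (hk.trans hjq)).const_mul (a j)).mono hjq
  · have hcondExp := condExp_finsetSum_mul_ae_eq a
      (fun j _ => integrable_add_pow (μ := μ) hX he hcX hce j) fun j hj =>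
        condExp_add_pow_ae_eq hle hXσ he hcX hce (M := fun k ω => m k (X ω)) fun k hk =>
          hmMoment k (hk.trans (Nat.lt_succ_iff.mp (Finset.mem_range.mp hj)))
    simp only [hgstar]
    filter_upwards [hcondExp] with ω hω
    simp only [hω, mul_assoc]
end
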